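/- Let (θ_n)_{n≥0} be a sequence of finite plane trees, and let T be the sin-tree whose backbone BB is its rightmost branch and such that, for every n, the subtree consisting of BB_n together with all its descendants that are not descendants of BB_{n+1} is a copy of θ_n rooted at BB_n (i.e. the root of θ_n is identified with BB_n, its children being inserted before the backbone child BB_{n+1}). Let U be the Lukaciewicz path of the sequence (θ_n), i.e. U(n) = Σ_{i<n} (k_{u^i} − 1) where u⁰, u¹, … enumerates all vertices of θ_0 in lexicographic order, then all vertices of θ_1, and so on, and where k_{u^i} is the number of children of u^i in its own tree. Let V be the Lukaciewicz path of T. Then for every n ≥ 0, V(n) = U(n) + 1 − U̲(n−1), where U̲(m) = min_{0≤i≤m} U(i) and by convention U̲(−1) = 1. -/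

import Mathlib

namespace IPC
/-- A plane tree: a set of finite sequences of positive integers (vertices), containing
the root `[]`, closed under prefixes, closed under earlier siblings, with labels ≥ 1. -/
def IsPlaneTree (T : Set (List ℕ)) : Prop :=
  [] ∈ T ∧
  (∀ v ∈ T, ∀ u : List ℕ, u <+: v → u ∈ T) ∧
  (∀ (v : List ℕ) (i j : ℕ), v ++ [i] ∈ T → 1 ≤ j → j ≤ i → v ++ [j] ∈ T) ∧
  (∀ v ∈ T, ∀ i ∈ v, 1 ≤ i)
/-- `kv T v` : number of children of the vertex `v` in `T`. -/
noncomputable def kv (T : Set (List ℕ)) (v : List ℕ) : ℕ := {i : ℕ | v ++ [i] ∈ T}.ncard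
/-- `rank T v` : number of strict lexicographic predecessors of `v` in `T`. -/
noncomputable def rank (T : Set (List ℕ)) (v : List ℕ) : ℕ := {u ∈ T | u < v}.ncard
/-- Lukaciewicz path of `T`: `luk T n = ∑_{i<n} (k_{vⁱ} - 1)` where `vⁱ` is the `i`-th
vertex of `T` in lexicographic order. -/
noncomputable def luk (T : Set (List ℕ)) (n : ℕ) : ℤ :=
  ∑ᶠ v ∈ {u ∈ T | rank T u < n}, ((kv T v : ℤ) - 1)
/-- `T^v`: the set of vertices of `T` lexicographically ≤ `v`. -/
def below (T : Set (List ℕ)) (v : List ℕ) : Set (List ℕ) := {u ∈ T | u ≤ v}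
/-- `nEdge T v = n(v,T)`: the number of edges of `T` with exactly one endpoint in `T^v`;
an edge is identified with its child endpoint. -/
noncomputable def nEdge (T : Set (List ℕ)) (v : List ℕ) : ℕ :=
  {c ∈ T | c ≠ [] ∧ Xor' (c.dropLast ∈ below T v) (c ∈ below T v)}.ncard

/-- number of children of the root. -/
noncomputable def rootDeg (θ : Set (List ℕ)) : ℕ := kv θ []

/-- Address of the `n`-th backbone vertex of the sin-tree obtained by identifying the
root of `θ n` with the `n`-th backbone vertex, the backbone child coming last. -/
noncomputable def bbGlue (θ : ℕ → Set (List ℕ)) : ℕ → List ℕ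
  | 0 => []
  | n + 1 => bbGlue θ n ++ [rootDeg (θ n) + 1]

/-- The sin-tree whose backbone is its rightmost branch and in which the subtree made of
`BB_n` and its descendants that are not descendants of `BB_{n+1}` is a copy of `θ n`. -/
noncomputable def glueTree (θ : ℕ → Set (List ℕ)) : Set (List ℕ) :=
  ⋃ n, (fun w => bbGlue θ n ++ w) '' θ n

/-- Rank of a vertex `p.2 ∈ θ p.1` in the concatenated enumeration of the sequence of
trees `θ 0, θ 1, …` (all vertices of `θ 0` in lexicographic order, then those of
`θ 1`, and so on). -/
noncomputable def seqRank (θ : ℕ → Set (List ℕ)) (p : ℕ × List ℕ) : ℕ :=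
  (∑ i ∈ Finset.range p.1, (θ i).ncard) + rank (θ p.1) p.2

/-- Lukaciewicz path `U` of the sequence of trees `(θ n)`:
`U(n) = ∑_{i<n} (k_{uⁱ} - 1)` along the concatenated enumeration. -/
noncomputable def seqLuk (θ : ℕ → Set (List ℕ)) (n : ℕ) : ℤ :=
  ∑ᶠ p ∈ {q : ℕ × List ℕ | q.2 ∈ θ q.1 ∧ seqRank θ q < n},
    ((kv (θ p.1) p.2 : ℤ) - 1)

end IPC

/-!
Write `φ (m, u) = BB_m ++ u` for the copy in the glued tree of the vertex `u` of `θ m`. A vertex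
of `θ m` precedes every vertex `BB_n ++ x` with `n > m`, because `BB_n` passes through the child
`k_∅(θ m) + 1` of `BB_m`, which comes after all children of the root of `θ m`. Hence `φ` carries
the concatenated enumeration of the sequence onto the lexicographic enumeration of the glued tree,
and it preserves numbers of children except at the backbone vertices `φ (m, ∅)`, which gain the
backbone child. Therefore `V(k) = U(k) + N(k)`, where `N(k)` counts the trees whose root is among
the first `k` vertices. Along the vertices of `θ m`, `U` is `-m` plus the Lukaciewicz path of
`θ m`, which stays nonnegative until the tree is exhausted; so if the `n`-th vertex lies in `θ M`,
the minimum of `U` on `[0, n]` is `-M = 1 - N(n + 1)`.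
-/

theorem List.append_lt_append_left_iff {α : Type*} [LinearOrder α] (a : List α) {u v : List α} :
    a ++ u < a ++ v ↔ u < v :=
  StrictMono.lt_iff_lt fun _ _ h => List.append_left_lt h

theorem List.dropLast_lt {α : Type*} [LT α] {c : List α} (hc : c ≠ []) : c.dropLast < c := by
  conv_rhs => rw [← List.dropLast_concat_getLast hc]
  simpa using List.append_left_lt (l₁ := c.dropLast) (List.nil_lt_cons (c.getLast hc) [])

theorem finsum_mem_boole {α R : Type*} [AddCommMonoidWithOne R] {s t : Set α}
    [DecidablePred (· ∈ t)] (hs : s.Finite) :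
    ∑ᶠ a ∈ s, (if a ∈ t then (1 : R) else 0) = (s ∩ t).ncard := by
  rw [finsum_mem_eq_finite_toFinset_sum _ hs, Finset.sum_boole,
    Set.ncard_eq_toFinset_card _ (hs.inter_of_left t)]
  congr 2
  ext
  simp

theorem Nat.exists_le_lt_succ_of_strictMono {f : ℕ → ℕ} (hf : StrictMono f) (h0 : f 0 = 0)
    (n : ℕ) : ∃ m, f m ≤ n ∧ n < f (m + 1) := by
  classical
  have hex : ∃ m, n < f (m + 1) := ⟨n, Nat.lt_succ_self n |>.trans_le (hf.id_le (n + 1))⟩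
  refine ⟨Nat.find hex, ?_, Nat.find_spec hex⟩
  rcases h : Nat.find hex with _ | m
  · simp [h0]
  · exact not_lt.mp (Nat.find_min hex (h ▸ Nat.lt_succ_self m))

theorem Nat.setOf_lt_succ_eq_Iic_of_strictMono {f : ℕ → ℕ} (hf : StrictMono f) {m n : ℕ}
    (hm : f m ≤ n) (hn : n < f (m + 1)) : {i | f i < n + 1} = Set.Iic m := by
  ext i
  simp only [Set.mem_ofPred_eq, Set.mem_Iic, Nat.lt_succ_iff]
  exact ⟨fun hi => Nat.lt_succ_iff.mp (hf.lt_iff_lt.mp (hi.trans_lt hn)),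
    fun hi => (hf.monotone hi).trans hm⟩

namespace IPC

section PlaneTree

variable {T : Set (List ℕ)}

theorem IsPlaneTree.dropLast_mem (hT : IsPlaneTree T) {c : List ℕ} (hc : c ∈ T) :
    c.dropLast ∈ T :=
  hT.2.1 c hc _ c.dropLast_prefix

theorem finite_setOf_append_mem (hfin : T.Finite) (v : List ℕ) : {i | v ++ [i] ∈ T}.Finite :=
  hfin.preimage (List.append_right_injective v |>.comp List.singleton_injective).injOn

theorem le_kv_of_append_mem (hT : IsPlaneTree T) (hfin : T.Finite) {v : List ℕ} {i : ℕ}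
    (h : v ++ [i] ∈ T) : i ≤ kv T v := by
  have hsub : Set.Icc 1 i ⊆ {j | v ++ [j] ∈ T} := fun j hj => hT.2.2.1 v i j h hj.1 hj.2
  simpa [kv] using Set.ncard_le_ncard hsub (finite_setOf_append_mem hfin v)

theorem head_le_kv_nil (hT : IsPlaneTree T) (hfin : T.Finite) {i : ℕ} {t : List ℕ}
    (h : i :: t ∈ T) : i ≤ kv T [] :=
  le_kv_of_append_mem hT hfin (hT.2.1 _ h [i] ⟨t, rfl⟩)

theorem rank_nil : rank T [] = 0 := by
  simp [rank]

theorem rank_lt_ncard (hfin : T.Finite) {v : List ℕ} (hv : v ∈ T) : rank T v < T.ncard :=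
  Set.ncard_lt_ncard ⟨fun _ hu => hu.1, fun h => lt_irrefl v (h hv).2⟩ hfin

theorem rank_strictMonoOn (hfin : T.Finite) : StrictMonoOn (rank T) T := fun u hu _ _ huv =>
  Set.ncard_lt_ncard ⟨fun _ hw => ⟨hw.1, hw.2.trans huv⟩, fun h => lt_irrefl u (h ⟨hu, huv⟩).2⟩
    (hfin.subset fun _ hw => hw.1)

theorem image_rank (hfin : T.Finite) : rank T '' T = Set.Iio T.ncard := by
  refine Set.eq_of_subset_of_ncard_le ?_ ?_ (Set.finite_Iio _)
  · rintro _ ⟨v, hv, rfl⟩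
    exact rank_lt_ncard hfin hv
  · rw [Set.ncard_Iio_nat, (rank_strictMonoOn hfin).injOn.ncard_image]

theorem ncard_setOf_rank_lt (hfin : T.Finite) {j : ℕ} (hj : j ≤ T.ncard) :
    {v ∈ T | rank T v < j}.ncard = j := by
  have himage : rank T '' {v ∈ T | rank T v < j} = Set.Iio j := by
    change rank T '' (T ∩ rank T ⁻¹' Set.Iio j) = _
    rw [Set.image_inter_preimage, image_rank hfin,
      Set.inter_eq_right.mpr (Set.Iio_subset_Iio hj)]
  rw [← ((rank_strictMonoOn hfin).injOn.mono fun _ hv => hv.1).ncard_image, himage,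
    Set.ncard_Iio_nat]

theorem finsum_mem_kv (hfin : T.Finite) {G : Set (List ℕ)} (hG : G.Finite) :
    ∑ᶠ v ∈ G, kv T v = {c ∈ T | c ≠ [] ∧ c.dropLast ∈ G}.ncard := by
  have hunion : {c ∈ T | c ≠ [] ∧ c.dropLast ∈ G}
      = ⋃ v ∈ G, (v ++ [·]) '' {i | v ++ [i] ∈ T} := by
    ext c
    simp only [Set.mem_ofPred_eq, Set.mem_iUnion, Set.mem_image, exists_prop]
    constructor
    · rintro ⟨hc, hne, hcG⟩
      exact ⟨c.dropLast, hcG, c.getLast hne, by rwa [List.dropLast_concat_getLast],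
        List.dropLast_concat_getLast hne⟩
    · rintro ⟨v, hv, i, hi, rfl⟩
      simp [hi, hv]
  rw [hunion, hG.ncard_biUnion (fun v _ => (finite_setOf_append_mem hfin v).image _)]
  · refine finsum_mem_congr rfl fun v _ => ?_
    rw [Set.InjOn.ncard_image fun _ _ _ _ h => by simpa using h, kv]
  · intro u _ v _ huv
    refine Set.disjoint_left.mpr ?_
    rintro _ ⟨i, -, rfl⟩ ⟨j, -, h⟩
    exact huv (List.append_inj' h rfl).1.symm

theorem finsum_mem_kv_sub_one (hfin : T.Finite) {G : Set (List ℕ)} (hG : G ⊆ T) :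
    ∑ᶠ v ∈ G, ((kv T v : ℤ) - 1)
      = ({c ∈ T | c ≠ [] ∧ c.dropLast ∈ G}.ncard : ℤ) - G.ncard := by
  have hGfin := hfin.subset hG
  rw [finsum_mem_sub_distrib _ _ hGfin, ← Nat.cast_finsum_mem hGfin, finsum_mem_kv hfin hGfin,
    ← finsum_one (s := G), Nat.cast_finsum_mem hGfin, Nat.cast_one]

theorem luk_nonneg (hT : IsPlaneTree T) (hfin : T.Finite) {j : ℕ} (hj : j < T.ncard) :
    0 ≤ luk T j := by
  have hsub : {c ∈ T | rank T c < j + 1} \ {[]}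
      ⊆ {c ∈ T | c ≠ [] ∧ c.dropLast ∈ {v ∈ T | rank T v < j}} := by
    rintro c ⟨⟨hc, hcj⟩, hne : c ≠ []⟩
    have := rank_strictMonoOn hfin (hT.dropLast_mem hc) hc (List.dropLast_lt hne)
    exact ⟨hc, hne, hT.dropLast_mem hc, by omega⟩
  have hchildren := Set.ncard_le_ncard hsub (hfin.subset fun _ hc => hc.1)
  rw [Set.ncard_sdiff_singleton_of_mem (show [] ∈ {c ∈ T | rank T c < j + 1} by
    simp [hT.1, rank_nil]), ncard_setOf_rank_lt hfin hj] at hchildren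
  rw [luk, finsum_mem_kv_sub_one hfin fun _ hv => hv.1, ncard_setOf_rank_lt hfin hj.le]
  omega

theorem finsum_kv_sub_one (hT : IsPlaneTree T) (hfin : T.Finite) :
    ∑ᶠ v ∈ T, ((kv T v : ℤ) - 1) = -1 := by
  have hchildren : {c ∈ T | c ≠ [] ∧ c.dropLast ∈ T} = T \ {[]} := by
    ext c
    exact ⟨fun ⟨hc, hne, _⟩ => ⟨hc, hne⟩, fun ⟨hc, hne⟩ => ⟨hc, hne, hT.dropLast_mem hc⟩⟩
  have hpos : 0 < T.ncard := (Set.ncard_pos hfin).mpr ⟨[], hT.1⟩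
  rw [finsum_mem_kv_sub_one hfin le_rfl, hchildren, Set.ncard_sdiff_singleton_of_mem hT.1]
  omega

theorem succ_kv_nil_cons_not_mem (hT : IsPlaneTree T) (hfin : T.Finite) (t : List ℕ) :
    (kv T [] + 1) :: t ∉ T := fun h => by
  have := head_le_kv_nil hT hfin h
  omega

end PlaneTree

section Sequence

variable {θ : ℕ → Set (List ℕ)}

noncomputable def seqStart (θ : ℕ → Set (List ℕ)) (m : ℕ) : ℕ :=
  ∑ i ∈ Finset.range m, (θ i).ncard

theorem seqStart_zero : seqStart θ 0 = 0 :=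
  Finset.sum_range_zero _

theorem seqStart_succ (m : ℕ) : seqStart θ (m + 1) = seqStart θ m + (θ m).ncard :=
  Finset.sum_range_succ _ _

theorem seqRank_eq (m : ℕ) (u : List ℕ) : seqRank θ (m, u) = seqStart θ m + rank (θ m) u :=
  rfl

theorem seqStart_strictMono (hθ : ∀ n, IsPlaneTree (θ n)) (hfin : ∀ n, (θ n).Finite) :
    StrictMono (seqStart θ) :=
  strictMono_nat_of_lt_succ fun m => by
    rw [seqStart_succ]
    exact Nat.lt_add_of_pos_right ((Set.ncard_pos (hfin m)).mpr ⟨[], (hθ m).1⟩)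

def verticesBefore (θ : ℕ → Set (List ℕ)) (n : ℕ) : Set (ℕ × List ℕ) :=
  {q | q.2 ∈ θ q.1 ∧ q.1 < n}

theorem verticesBefore_eq_biUnion (n : ℕ) :
    verticesBefore θ n = ⋃ i ∈ Set.Iio n, Prod.mk i '' θ i := by
  ext ⟨i, u⟩
  simp [verticesBefore, and_comm]

theorem verticesBefore_finite (hfin : ∀ n, (θ n).Finite) (n : ℕ) :
    (verticesBefore θ n).Finite := by
  rw [verticesBefore_eq_biUnion]
  exact (Set.finite_Iio n).biUnion fun i _ => (hfin i).image _

theorem disjoint_verticesBefore_image_mk (n : ℕ) (s : Set (List ℕ)) :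
    Disjoint (verticesBefore θ n) (Prod.mk n '' s) :=
  Set.disjoint_left.mpr fun _ hq ⟨_, _, hu⟩ => by
    rw [← hu] at hq
    exact lt_irrefl n hq.2

theorem finsum_mem_verticesBefore {M : Type*} [AddCommMonoid M] (hfin : ∀ n, (θ n).Finite)
    (g : ℕ × List ℕ → M) (n : ℕ) :
    ∑ᶠ q ∈ verticesBefore θ n, g q = ∑ i ∈ Finset.range n, ∑ᶠ u ∈ θ i, g (i, u) := by
  have hdisj : (Set.Iio n).PairwiseDisjoint fun i => Prod.mk i '' θ i := fun i _ j _ hij =>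
    Set.disjoint_left.mpr fun _ ⟨_, _, hu⟩ ⟨_, _, hv⟩ => hij (congrArg Prod.fst (hu.trans hv.symm))
  rw [verticesBefore_eq_biUnion, finsum_mem_biUnion hdisj (Set.finite_Iio n)
    fun i _ => (hfin i).image _, ← Finset.coe_range, finsum_mem_coe_finset]
  exact Finset.sum_congr rfl fun i _ => finsum_mem_image (Prod.mk_right_injective i).injOn

theorem ncard_verticesBefore (hfin : ∀ n, (θ n).Finite) (n : ℕ) :
    (verticesBefore θ n).ncard = seqStart θ n := by
  simp only [← finsum_one, finsum_mem_verticesBefore hfin, seqStart]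

theorem finsum_verticesBefore_kv_sub_one (hθ : ∀ n, IsPlaneTree (θ n))
    (hfin : ∀ n, (θ n).Finite) (n : ℕ) :
    ∑ᶠ q ∈ verticesBefore θ n, ((kv (θ q.1) q.2 : ℤ) - 1) = -n := by
  simp [finsum_mem_verticesBefore hfin, finsum_kv_sub_one (hθ _) (hfin _)]

theorem seqLuk_seqStart_add (hθ : ∀ n, IsPlaneTree (θ n)) (hfin : ∀ n, (θ n).Finite)
    {m j : ℕ} (hj : j ≤ (θ m).ncard) :
    seqLuk θ (seqStart θ m + j) = luk (θ m) j - m := by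
  have hf := seqStart_strictMono hθ hfin
  have hset : {q : ℕ × List ℕ | q.2 ∈ θ q.1 ∧ seqRank θ q < seqStart θ m + j}
      = verticesBefore θ m ∪ Prod.mk m '' {u ∈ θ m | rank (θ m) u < j} := by
    ext ⟨i, u⟩
    simp only [Set.mem_ofPred_eq, Set.mem_union, Set.mem_image, Prod.mk.injEq, seqRank_eq,
      verticesBefore]
    constructor
    · rintro ⟨hu, hr⟩
      rcases lt_trichotomy i m with him | rfl | hmi
      · exact Or.inl ⟨hu, him⟩
      · exact Or.inr ⟨u, ⟨hu, by omega⟩, rfl, rfl⟩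
      · have hstart := hf.monotone (show m + 1 ≤ i from hmi)
        rw [seqStart_succ] at hstart
        omega
    · rintro (⟨hu, him⟩ | ⟨u, ⟨hu, hr⟩, rfl, rfl⟩)
      · refine ⟨hu, ?_⟩
        have hstart := hf.monotone (show i + 1 ≤ m from him)
        rw [seqStart_succ] at hstart
        have := rank_lt_ncard (hfin i) hu
        omega
      · exact ⟨hu, by omega⟩
  rw [seqLuk, hset, finsum_mem_union (disjoint_verticesBefore_image_mk m _)
      (verticesBefore_finite hfin m) (((hfin m).subset fun _ hu => hu.1).image _),
    finsum_verticesBefore_kv_sub_one hθ hfin, finsum_mem_image (Prod.mk_right_injective m).injOn,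
    luk]
  ring

theorem inf'_seqLuk (hθ : ∀ n, IsPlaneTree (θ n)) (hfin : ∀ n, (θ n).Finite) {m n : ℕ}
    (hm : seqStart θ m ≤ n) (hn : n < seqStart θ (m + 1)) :
    (Finset.range (n + 1)).inf' Finset.nonempty_range_add_one (seqLuk θ) = -m := by
  have hf := seqStart_strictMono hθ hfin
  refine le_antisymm ?_ (Finset.le_inf' _ _ fun i hi => ?_)
  · calc _ ≤ seqLuk θ (seqStart θ m) := Finset.inf'_le _ (Finset.mem_range_succ_iff.mpr hm)
      _ = -m := by simpa [luk] using seqLuk_seqStart_add hθ hfin (Nat.zero_le _)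
  · obtain ⟨l, hl, hl'⟩ := Nat.exists_le_lt_succ_of_strictMono hf seqStart_zero i
    have hlm : l ≤ m := Nat.lt_succ_iff.mp
      (hf.lt_iff_lt.mp (hl.trans_lt ((Finset.mem_range_succ_iff.mp hi).trans_lt hn)))
    obtain ⟨j, rfl⟩ := Nat.exists_eq_add_of_le hl
    rw [seqStart_succ] at hl'
    rw [seqLuk_seqStart_add hθ hfin (by omega)]
    have := luk_nonneg (hθ l) (hfin l) (show j < (θ l).ncard by omega)
    have : (l : ℤ) ≤ m := by exact_mod_cast hlm
    omega

end Sequence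

section GlueTree

variable {θ : ℕ → Set (List ℕ)}

theorem mem_glueTree_iff {v : List ℕ} :
    v ∈ glueTree θ ↔ ∃ m, ∃ u ∈ θ m, bbGlue θ m ++ u = v := by
  simp [glueTree]

theorem bbGlue_append_mem_glueTree {n : ℕ} {u : List ℕ} (hu : u ∈ θ n) :
    bbGlue θ n ++ u ∈ glueTree θ :=
  mem_glueTree_iff.mpr ⟨n, u, hu, rfl⟩

theorem bbGlue_prefix_bbGlue {m n : ℕ} (h : m ≤ n) : bbGlue θ m <+: bbGlue θ n := by
  induction n, h using Nat.le_induction with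
  | base => exact List.prefix_refl _
  | succ n _ ih => exact ih.trans (List.prefix_append _ _)

theorem bbGlue_append_prefix_bbGlue {m n : ℕ} (h : m < n) :
    bbGlue θ m ++ [rootDeg (θ m) + 1] <+: bbGlue θ n :=
  bbGlue_prefix_bbGlue (θ := θ) h

theorem bbGlue_append_eq_cases (hθ : ∀ n, IsPlaneTree (θ n)) (hfin : ∀ n, (θ n).Finite)
    {m n : ℕ} {u x : List ℕ} (hu : u ∈ θ m) (h : bbGlue θ n ++ x = bbGlue θ m ++ u) :
    (m = n ∧ u = x) ∨ (n < m ∧ ∃ y, x = (rootDeg (θ n) + 1) :: y) := by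
  rcases lt_trichotomy m n with hmn | rfl | hnm
  · have hpre := (bbGlue_append_prefix_bbGlue (θ := θ) hmn).trans (List.prefix_append _ x)
    rw [h, List.prefix_append_right_inj] at hpre
    obtain ⟨t, rfl⟩ := hpre
    exact absurd hu (succ_kv_nil_cons_not_mem (hθ m) (hfin m) t)
  · exact Or.inl ⟨rfl, (List.append_cancel_left h).symm⟩
  · have hpre := (bbGlue_append_prefix_bbGlue (θ := θ) hnm).trans (List.prefix_append _ u)
    rw [← h, List.prefix_append_right_inj] at hpre
    obtain ⟨t, rfl⟩ := hpre
    exact Or.inr ⟨hnm, t, rfl⟩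

theorem bbGlue_append_injOn (hθ : ∀ n, IsPlaneTree (θ n)) (hfin : ∀ n, (θ n).Finite) :
    Set.InjOn (fun q : ℕ × List ℕ => bbGlue θ q.1 ++ q.2) {q | q.2 ∈ θ q.1} := by
  rintro ⟨m, u⟩ (hu : u ∈ θ m) ⟨n, x⟩ (hx : x ∈ θ n) (h : bbGlue θ m ++ u = bbGlue θ n ++ x)
  rcases bbGlue_append_eq_cases hθ hfin hu h.symm with ⟨rfl, rfl⟩ | ⟨-, y, rfl⟩
  · rfl
  · exact absurd hx (succ_kv_nil_cons_not_mem (hθ n) (hfin n) y)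

theorem bbGlue_append_lt (hθ : ∀ n, IsPlaneTree (θ n)) (hfin : ∀ n, (θ n).Finite)
    {m n : ℕ} {u : List ℕ} (hu : u ∈ θ m) (hmn : m < n) (x : List ℕ) :
    bbGlue θ m ++ u < bbGlue θ n ++ x := by
  obtain ⟨r, hr⟩ := bbGlue_append_prefix_bbGlue (θ := θ) hmn
  rw [← hr, List.append_assoc, List.append_assoc, List.singleton_append,
    List.append_lt_append_left_iff]
  match u, hu with
  | [], _ => exact List.nil_lt_cons _ _
  | i :: t, hu => exact List.Lex.rel (Nat.lt_succ_of_le (head_le_kv_nil (hθ m) (hfin m) hu))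

theorem kv_glueTree (hθ : ∀ n, IsPlaneTree (θ n)) (hfin : ∀ n, (θ n).Finite)
    {n : ℕ} {w : List ℕ} (hw : w ∈ θ n) :
    kv (glueTree θ) (bbGlue θ n ++ w) = kv (θ n) w + if w = [] then 1 else 0 := by
  have hchildren : {i | bbGlue θ n ++ w ++ [i] ∈ glueTree θ}
      = {i | w ++ [i] ∈ θ n ∨ (w = [] ∧ i = rootDeg (θ n) + 1)} := by
    ext i
    simp only [Set.mem_ofPred_eq, List.append_assoc]
    constructor
    · intro hi
      obtain ⟨m, u, hu, h⟩ := mem_glueTree_iff.mp hi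
      rcases bbGlue_append_eq_cases hθ hfin hu h.symm with ⟨rfl, rfl⟩ | ⟨-, y, hy⟩
      · exact Or.inl hu
      · match w, hw, hy with
        | [], _, hy => exact Or.inr ⟨rfl, (List.cons.inj hy).1⟩
        | _ :: w, hw, hy =>
          rw [List.cons_append, List.cons.injEq] at hy
          rw [hy.1] at hw
          exact absurd hw (succ_kv_nil_cons_not_mem (hθ n) (hfin n) _)
    · rintro (h | ⟨rfl, rfl⟩)
      · exact bbGlue_append_mem_glueTree h
      · simpa [bbGlue] using bbGlue_append_mem_glueTree (n := n + 1) (hθ (n + 1)).1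
  rw [kv, hchildren]
  by_cases hw0 : w = []
  · subst hw0
    have hnot : rootDeg (θ n) + 1 ∉ {i | [] ++ [i] ∈ θ n} := fun h => by
      have := le_kv_of_append_mem (hθ n) (hfin n) h
      simp [rootDeg] at this
    simp only [true_and, ite_true]
    rw [Set.ofPred_or, Set.ofPred_eq_eq_singleton, Set.union_singleton,
      Set.ncard_insert_of_notMem hnot (finite_setOf_append_mem (hfin n) []), kv]
  · simp [hw0, kv]

theorem rank_glueTree (hθ : ∀ n, IsPlaneTree (θ n)) (hfin : ∀ n, (θ n).Finite)
    {n : ℕ} {w : List ℕ} (hw : w ∈ θ n) :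
    rank (glueTree θ) (bbGlue θ n ++ w) = seqRank θ (n, w) := by
  have hpred : {v ∈ glueTree θ | v < bbGlue θ n ++ w}
      = (fun q => bbGlue θ q.1 ++ q.2) ''
          (verticesBefore θ n ∪ Prod.mk n '' {u ∈ θ n | u < w}) := by
    ext v
    constructor
    · rintro ⟨hv, hlt⟩
      obtain ⟨m, u, hu, rfl⟩ := mem_glueTree_iff.mp hv
      rcases lt_trichotomy m n with hmn | rfl | hnm
      · exact ⟨(m, u), Or.inl ⟨hu, hmn⟩, rfl⟩
      · exact ⟨(m, u), Or.inr ⟨u, ⟨hu, (List.append_lt_append_left_iff _).mp hlt⟩, rfl⟩, rfl⟩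
      · exact absurd (bbGlue_append_lt hθ hfin hw hnm u) (lt_asymm hlt)
    · rintro ⟨_, ⟨hu, hmn⟩ | ⟨u, ⟨hu, hlt⟩, rfl⟩, rfl⟩
      · exact ⟨bbGlue_append_mem_glueTree hu, bbGlue_append_lt hθ hfin hu hmn w⟩
      · exact ⟨bbGlue_append_mem_glueTree hu, (List.append_lt_append_left_iff _).mpr hlt⟩
  have hsub : verticesBefore θ n ∪ Prod.mk n '' {u ∈ θ n | u < w} ⊆ {q | q.2 ∈ θ q.1} := by
    rintro _ (hq | ⟨u, hu, rfl⟩)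
    exacts [hq.1, hu.1]
  rw [rank, hpred, ((bbGlue_append_injOn hθ hfin).mono hsub).ncard_image,
    Set.ncard_union_eq (disjoint_verticesBefore_image_mk n _) (verticesBefore_finite hfin n)
      (((hfin n).subset fun _ hu => hu.1).image _),
    ncard_verticesBefore hfin, (Prod.mk_right_injective n).injOn.ncard_image]
  rfl

theorem luk_glueTree (hθ : ∀ n, IsPlaneTree (θ n)) (hfin : ∀ n, (θ n).Finite) (k : ℕ) :
    luk (glueTree θ) k = seqLuk θ k + {m | seqStart θ m < k}.ncard := by
  set Q := {q : ℕ × List ℕ | q.2 ∈ θ q.1 ∧ seqRank θ q < k}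
  have hQ : {v ∈ glueTree θ | rank (glueTree θ) v < k} = (fun q => bbGlue θ q.1 ++ q.2) '' Q := by
    ext v
    constructor
    · rintro ⟨hv, hk⟩
      obtain ⟨m, u, hu, rfl⟩ := mem_glueTree_iff.mp hv
      exact ⟨(m, u), ⟨hu, rank_glueTree hθ hfin hu ▸ hk⟩, rfl⟩
    · rintro ⟨⟨m, u⟩, ⟨hu, hk⟩, rfl⟩
      exact ⟨bbGlue_append_mem_glueTree hu, (rank_glueTree hθ hfin hu).symm ▸ hk⟩
  have hQfin : Q.Finite := (verticesBefore_finite hfin k).subset fun q hq =>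
    ⟨hq.1, ((seqStart_strictMono hθ hfin).id_le q.1).trans_lt
      ((Nat.le_add_right _ _).trans_lt hq.2)⟩
  have hroots : Q ∩ {q | q.2 = []} = (·, []) '' {m | seqStart θ m < k} := by
    ext ⟨m, u⟩
    simp only [Set.mem_inter_iff, Set.mem_ofPred_eq, Set.mem_image, Prod.mk.injEq]
    constructor
    · rintro ⟨⟨-, hk⟩, rfl⟩
      exact ⟨m, by simpa [seqRank_eq, rank_nil] using hk, rfl, rfl⟩
    · rintro ⟨m, hk, rfl, rfl⟩
      exact ⟨⟨(hθ m).1, by simpa [seqRank_eq, rank_nil] using hk⟩, rfl⟩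
  have hkv : ∀ q ∈ Q, ((kv (glueTree θ) (bbGlue θ q.1 ++ q.2) : ℤ) - 1)
      = ((kv (θ q.1) q.2 : ℤ) - 1) + if q ∈ {q | q.2 = []} then 1 else 0 := by
    intro q hq
    rw [kv_glueTree hθ hfin hq.1]
    split_ifs <;> simp_all
  rw [luk, hQ, finsum_mem_image ((bbGlue_append_injOn hθ hfin).mono fun q hq => hq.1),
    finsum_mem_congr rfl hkv, finsum_mem_add_distrib hQfin, finsum_mem_boole hQfin, hroots,
    (Prod.mk_left_injective []).injOn.ncard_image]
  rfl

end GlueTree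

/-- Gluing a sequence of finite plane trees to a rightmost backbone:
the Lukaciewicz path `V` of the glued sin-tree and the Lukaciewicz path `U` of the
sequence satisfy `V(n) = U(n) + 1 - U̲(n-1)`, with the convention `U̲(-1) = 1`
(so `V(0) = U(0) + 1 - 1`) and `U̲(m) = min_{0 ≤ i ≤ m} U(i)`. -/
theorem luk_glue_to_backbone (θ : ℕ → Set (List ℕ))
    (hθ : ∀ n, IsPlaneTree (θ n)) (hfin : ∀ n, (θ n).Finite) :
    luk (glueTree θ) 0 = seqLuk θ 0 + 1 - 1 ∧
    ∀ n : ℕ, luk (glueTree θ) (n + 1) =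
      seqLuk θ (n + 1) + 1 -
        (Finset.range (n + 1)).inf' Finset.nonempty_range_add_one (fun i => seqLuk θ i) := by
  have hf := seqStart_strictMono hθ hfin
  refine ⟨by simp [luk_glueTree hθ hfin 0], fun n => ?_⟩
  obtain ⟨m, hm, hn⟩ := Nat.exists_le_lt_succ_of_strictMono hf seqStart_zero n
  rw [luk_glueTree hθ hfin, Nat.setOf_lt_succ_eq_Iic_of_strictMono hf hm hn, Set.ncard_Iic_nat,
    inf'_seqLuk hθ hfin hm hn]
  push_cast
  ring

end IPC
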